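/- arXiv:2110.05137 — 3 statements merged into one kernel-verified Lean document; each statement's English description precedes it below -/
import Mathlib

section
/- Let (X,d,m) be a geodesic Monge metric measure space. Then every sphere S_r(x) = {y ∈ X : d(x,y) = r}, for x ∈ X and r > 0, is m-negligible; consequently every open ball is an m-continuity set, i.e. m(∂B_r(x)) = 0. -/
open MeasureTheory Metric Set Filter Topology Bornology unitInterval ENNReal NNReal

noncomputable section

/-- A constant-speed geodesic parametrized on the unit interval. -/
def IsCSGeodesic {X : Type*} [MetricSpace X] (γ : C(unitInterval, X)) : Prop :=
  ∀ s t : unitInterval, dist (γ s) (γ t) = |(t : ℝ) - (s : ℝ)| * dist (γ 0) (γ 1)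

instance pathMeasurableSpace {X : Type*} [MetricSpace X] :
    MeasurableSpace C(unitInterval, X) := borel _

instance pathBorelSpace {X : Type*} [MetricSpace X] :
    BorelSpace C(unitInterval, X) := ⟨rfl⟩

/-- The squared `L²`-Wasserstein distance. -/
def W2sq {X : Type*} [MetricSpace X] [MeasurableSpace X] (μ0 μ1 : Measure X) : ℝ≥0∞ :=
  ⨅ (π : Measure (X × X)) (_ : π.map Prod.fst = μ0 ∧ π.map Prod.snd = μ1),
    ∫⁻ p, edist p.1 p.2 ^ 2 ∂π

/-- `π` is an optimal dynamical plan connecting `μ0` and `μ1`. -/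
def IsOptDynPlan {X : Type*} [MetricSpace X] [MeasurableSpace X]
    (π : Measure C(unitInterval, X)) (μ0 μ1 : Measure X) : Prop :=
  IsProbabilityMeasure π ∧
  π {γ | ¬ IsCSGeodesic γ} = 0 ∧
  π.map (fun γ => γ 0) = μ0 ∧
  π.map (fun γ => γ 1) = μ1 ∧
  ∫⁻ γ, edist (γ 0) (γ 1) ^ 2 ∂π = W2sq μ0 μ1

/-- Finite second moment. -/
def FinSecondMoment {X : Type*} [MetricSpace X] [MeasurableSpace X] (μ : Measure X) : Prop :=
  ∃ x0 : X, ∫⁻ x, edist x x0 ^ 2 ∂μ ≠ ⊤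

/-- Monge space: uniqueness of the optimal dynamical plan, good transport behavior,
and the strong interpolation property. -/
def IsMonge {X : Type*} [MetricSpace X] [MeasurableSpace X] (m : Measure X) : Prop :=
  ∀ μ0 μ1 : Measure X, IsProbabilityMeasure μ0 → IsProbabilityMeasure μ1 →
    FinSecondMoment μ0 → FinSecondMoment μ1 → μ0 ≪ m →
    (∃! π : Measure C(unitInterval, X), IsOptDynPlan π μ0 μ1) ∧
    ∀ π : Measure C(unitInterval, X), IsOptDynPlan π μ0 μ1 →
      (∃ T : X → C(unitInterval, X), π = μ0.map T) ∧
      (∀ t : unitInterval, t ≠ 1 → π.map (fun γ => γ t) ≪ m)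

/-- Geodesic metric space: any two points are joined by a constant-speed geodesic. -/
def GeodesicMS (X : Type*) [MetricSpace X] : Prop :=
  ∀ x y : X, ∃ γ : C(unitInterval, X), IsCSGeodesic γ ∧ γ 0 = x ∧ γ 1 = y

/-- The distortion coefficient `σ^{(t)}_{K,M}(θ)`. -/
def sigmaCoef (K M t θ : ℝ) : ℝ≥0∞ :=
  if K * θ ^ 2 = 0 then ENNReal.ofReal t
  else if 0 < K then
    (if θ * Real.sqrt (K / M) < Real.pi then
      ENNReal.ofReal (Real.sin (t * θ * Real.sqrt (K / M)) / Real.sin (θ * Real.sqrt (K / M)))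
    else ⊤)
  else ENNReal.ofReal (Real.sinh (t * θ * Real.sqrt (-K / M)) / Real.sinh (θ * Real.sqrt (-K / M)))

/-- The dynamical distortion coefficient `τ^{(t)}_{K,N}(θ)`. -/
def tauCoef (K N t θ : ℝ) : ℝ≥0∞ :=
  ENNReal.ofReal t ^ (1 / N) * sigmaCoef K (N - 1) t θ ^ ((N - 1) / N)

/-- Milman's quasi curvature-dimension condition `QCD(Q,K,N)`. -/
def IsQCD {X : Type*} [MetricSpace X] [MeasurableSpace X] (m : Measure X) (Q K N : ℝ) : Prop :=
  GeodesicMS X ∧ IsMonge m ∧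
  ∀ (μ0 μ1 : Measure X) (π : Measure C(unitInterval, X)) (ρ : unitInterval → X → ℝ≥0∞),
    IsProbabilityMeasure μ0 → IsProbabilityMeasure μ1 →
    (∃ C0 : Set X, IsCompact C0 ∧ μ0 C0ᶜ = 0) → (∃ C1 : Set X, IsCompact C1 ∧ μ1 C1ᶜ = 0) →
    μ0 ≪ m → μ1 ≪ m → IsOptDynPlan π μ0 μ1 →
    (∀ t : unitInterval, π.map (fun γ => γ t) = m.withDensity (ρ t)) →
    ∀ t : unitInterval, (t : ℝ) ∈ Set.Ioo (0 : ℝ) 1 →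
      ∀ᵐ γ ∂π,
        ENNReal.ofReal Q ^ (-(1 / N)) *
          (tauCoef K N (1 - (t : ℝ)) (dist (γ 0) (γ 1)) * ((ρ 0 (γ 0))⁻¹ ^ (1 / N)) +
            tauCoef K N (t : ℝ) (dist (γ 0) (γ 1)) * ((ρ 1 (γ 1))⁻¹ ^ (1 / N))) ≤
        (ρ t (γ t))⁻¹ ^ (1 / N)

/-- The model volume coefficient `s_{K,N}`. -/
def sModel (K N r : ℝ) : ℝ :=
  if 0 < K then Real.sin (Real.sqrt (K / (N - 1)) * r)
  else if K = 0 then r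
  else Real.sinh (Real.sqrt (-K / (N - 1)) * r)

end

/-- In a geodesic Monge metric measure space, spheres are negligible and balls are
continuity sets of the reference measure. -/
theorem spheres_negligible_of_monge
    {X : Type*} [MetricSpace X] [CompleteSpace X] [TopologicalSpace.SeparableSpace X]
    [MeasurableSpace X] [BorelSpace X] (m : Measure X) [SigmaFinite m]
    (hfin : ∀ s : Set X, IsBounded s → m s ≠ ⊤)
    (hsupp : ∀ U : Set X, IsOpen U → U.Nonempty → m U ≠ 0)
    (hatom : ∀ x : X, m {x} = 0)
    (hgeo : GeodesicMS X) (hmonge : IsMonge m) :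
    (∀ (x : X) (r : ℝ), 0 < r → m {y | dist x y = r} = 0) ∧
      ∀ (x : X) (r : ℝ), 0 < r → m (frontier (ball x r)) = 0 := by
  have key : ∀ (x : X) (r : ℝ), 0 < r → m {y | dist x y = r} = 0 := by
    intro x r hr
    by_contra hS0
    set S : Set X := {y | dist x y = r} with hSdef
    have hScl : IsClosed S := isClosed_eq (continuous_const.dist continuous_id) continuous_const
    have hSmeas : MeasurableSet S := hScl.measurableSet
    have hSsub : S ⊆ closedBall x r := by
      intro y hy
      simp only [hSdef, Set.mem_setOf_eq] at hy
      simp [mem_closedBall, dist_comm, hy.le]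
    have hSfin : m S ≠ ⊤ := hfin S (isBounded_closedBall.subset hSsub)
    -- only countably many spheres around x have positive measure
    have hcnt : Set.Countable {s : ℝ | 0 < m (Metric.sphere x s)} := by
      apply MeasureTheory.Measure.countable_meas_pos_of_disjoint_iUnion
        (fun s => Metric.isClosed_sphere.measurableSet)
      intro a b hab
      simp only [Function.onFun, Set.disjoint_left]
      intro y hya hyb
      exact hab (by rw [← hya, ← hyb])
    -- pick s ∈ (0,r) with null sphere
    have hex : ∃ s ∈ Set.Ioo (0:ℝ) r, m (Metric.sphere x s) = 0 := by
      have aux := measure_diff_null (s := Set.Ioo (0:ℝ) r)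
        (Set.Countable.measure_zero hcnt volume)
      have len_pos : (0:ℝ≥0∞) < ENNReal.ofReal (r - 0) := by
        simp [hr]
      rw [← Real.volume_Ioo, ← aux] at len_pos
      rcases nonempty_of_measure_ne_zero len_pos.ne.symm with ⟨s, hsIoo, hs⟩
      exact ⟨s, hsIoo, by simpa only [Set.mem_setOf_eq, not_lt, le_zero_iff] using hs⟩
    obtain ⟨s, ⟨hs0, hsr⟩, hsnull⟩ := hex
    have hsnull' : m {y | dist x y = s} = 0 := by
      have : {y | dist x y = s} = Metric.sphere x s := by
        ext y; simp [Metric.sphere, dist_comm]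
      rw [this]; exact hsnull
    -- the interpolation time
    have hsrlt : s / r < 1 := (div_lt_one hr).mpr hsr
    have hsrpos : 0 < s / r := div_pos hs0 hr
    set t : unitInterval := ⟨1 - s / r, by constructor <;> linarith⟩ with htdef
    have htne : t ≠ 1 := by
      intro h
      have : (t : ℝ) = 1 := by rw [h]; simp
      simp only [htdef] at this
      linarith
    -- the measures
    set μ0 : Measure X := (m S)⁻¹ • m.restrict S with hμ0def
    set μ1 : Measure X := Measure.dirac x with hμ1def
    haveI hprob0 : IsProbabilityMeasure μ0 := by
      constructor
      simp [hμ0def, Measure.smul_apply, Measure.restrict_apply_univ,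
        ENNReal.inv_mul_cancel hS0 hSfin]
    haveI hprob1 : IsProbabilityMeasure μ1 := by
      rw [hμ1def]; infer_instance
    have hac : μ0 ≪ m := by
      intro A hA
      have h1 : m.restrict S A = 0 := by
        rw [Measure.restrict_apply' hSmeas]
        exact le_antisymm (hA ▸ measure_mono Set.inter_subset_left) zero_le
      simp [hμ0def, Measure.smul_apply, h1]
    have hfin0 : FinSecondMoment μ0 := by
      refine ⟨x, ?_⟩
      have hb : ∫⁻ y, edist y x ^ 2 ∂(m.restrict S) ≤ (ENNReal.ofReal r) ^ 2 * m S := by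
        have hae : ∀ᵐ y ∂(m.restrict S), edist y x ^ 2 ≤ (ENNReal.ofReal r) ^ 2 := by
          rw [ae_restrict_iff' hSmeas]
          filter_upwards with y hy
          have : edist y x = ENNReal.ofReal r := by
            rw [edist_dist, dist_comm]
            simp only [hSdef, Set.mem_setOf_eq] at hy
            rw [hy]
          rw [this]
        calc ∫⁻ y, edist y x ^ 2 ∂(m.restrict S)
            ≤ ∫⁻ _, (ENNReal.ofReal r) ^ 2 ∂(m.restrict S) := lintegral_mono_ae hae
          _ = (ENNReal.ofReal r) ^ 2 * m S := by
              rw [lintegral_const, Measure.restrict_apply_univ]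
      rw [hμ0def, lintegral_smul_measure]
      exact ENNReal.mul_ne_top (ENNReal.inv_ne_top.mpr hS0)
        (lt_of_le_of_lt hb (ENNReal.mul_lt_top (ENNReal.pow_ne_top ENNReal.ofReal_ne_top).lt_top
          hSfin.lt_top)).ne
    have hfin1 : FinSecondMoment μ1 := by
      refine ⟨x, ?_⟩
      rw [hμ1def, lintegral_dirac' x (f := fun y => edist y x ^ 2) (by fun_prop)]
      simp
    -- invoke the Monge property
    obtain ⟨⟨π, hπ, -⟩, h2⟩ := hmonge μ0 μ1 hprob0 hprob1 hfin0 hfin1 hac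
    obtain ⟨-, habs⟩ := h2 π hπ
    obtain ⟨hπprob, hπgeo, hπ0, hπ1, -⟩ := hπ
    have hev : ∀ u : unitInterval, Measurable fun γ : C(unitInterval, X) => γ u :=
      fun u => (continuous_eval_const u).measurable
    -- almost every curve starts in S and ends at x
    have h0 : π {γ : C(unitInterval, X) | γ 0 ∉ S} = 0 := by
      have e1 : π.map (fun γ => γ 0) Sᶜ = μ0 Sᶜ := by rw [hπ0]
      rw [Measure.map_apply (hev 0) hSmeas.compl] at e1
      have e2 : μ0 Sᶜ = 0 := by
        simp [hμ0def, Measure.smul_apply, Measure.restrict_apply' hSmeas,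
          Set.compl_inter_self]
      rw [← e2, ← e1]
      rfl
    have h1 : π {γ : C(unitInterval, X) | γ 1 ≠ x} = 0 := by
      have e1 : π.map (fun γ => γ 1) {x}ᶜ = μ1 {x}ᶜ := by rw [hπ1]
      rw [Measure.map_apply (hev 1) (measurableSet_singleton x).compl] at e1
      have e2 : μ1 {x}ᶜ = 0 := by
        simp [hμ1def, Measure.dirac_apply' x (measurableSet_singleton x).compl]
      rw [← e2, ← e1]
      rfl
    -- the interpolation measure
    set ν : Measure X := π.map (fun γ => γ t) with hνdef
    haveI : IsProbabilityMeasure ν := Measure.isProbabilityMeasure_map (hev t).aemeasurable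
    have hνac : ν ≪ m := habs t htne
    have hAcl : IsClosed {y : X | dist x y = s} :=
      isClosed_eq (continuous_const.dist continuous_id) continuous_const
    have hν1 : ν {y | dist x y = s} = 0 := hνac hsnull'
    have hν2 : ν {y | dist x y = s}ᶜ = 0 := by
      rw [hνdef, Measure.map_apply (hev t) hAcl.measurableSet.compl]
      have hsub : (fun γ : C(unitInterval, X) => γ t) ⁻¹' {y | dist x y = s}ᶜ ⊆
          {γ : C(unitInterval, X) | ¬ IsCSGeodesic γ} ∪
          {γ : C(unitInterval, X) | γ 0 ∉ S} ∪ {γ : C(unitInterval, X) | γ 1 ≠ x} := by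
        intro γ hγ
        simp only [Set.mem_preimage, Set.mem_compl_iff, Set.mem_setOf_eq] at hγ
        by_contra hcon
        simp only [Set.mem_union, Set.mem_setOf_eq, not_or, not_not] at hcon
        obtain ⟨⟨hgeo', hγ0⟩, hγ1⟩ := hcon
        have hd01 : dist (γ 0) (γ 1) = r := by
          rw [hγ1, dist_comm]
          simpa only [hSdef, Set.mem_setOf_eq] using hγ0
        have hdt : dist (γ t) (γ 1) = |(1:ℝ) - (t:ℝ)| * dist (γ 0) (γ 1) := by
          have := hgeo' t 1
          simpa using this
        have htval : (t : ℝ) = 1 - s / r := rfl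
        have habs' : |(1:ℝ) - (t:ℝ)| = s / r := by
          rw [htval]
          rw [abs_of_nonneg] <;> [ring_nf; linarith]
        apply hγ
        rw [dist_comm, ← hγ1]
        rw [hdt, habs', hd01]
        field_simp
      exact measure_mono_null hsub (measure_union_null (measure_union_null hπgeo h0) h1)
    have : (1 : ℝ≥0∞) ≤ 0 := by
      calc (1 : ℝ≥0∞) = ν Set.univ := measure_univ.symm
        _ = ν ({y | dist x y = s} ∪ {y | dist x y = s}ᶜ) := by
            rw [Set.union_compl_self]
        _ ≤ ν {y | dist x y = s} + ν {y | dist x y = s}ᶜ := measure_union_le _ _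
        _ = 0 := by rw [hν1, hν2, add_zero]
    simp at this
  refine ⟨key, fun x r hr => ?_⟩
  have hsub : frontier (ball x r) ⊆ {y | dist x y = r} := by
    intro y hy
    have := frontier_ball_subset_sphere hy
    simpa [Metric.sphere, dist_comm, Set.mem_setOf_eq] using this
  exact measure_mono_null hsub (key x r hr)
end

section
/- Let (X,d,m) be a σ-finite, atomless metric measure space which is non-degenerate, i.e. for every Borel A with m(A)>0, every x ∈ X, and every t ∈ (0,1), the t-intermediate set A_{t,x} = {γ_t : γ ∈ Geo(X,d), γ_0 ∈ A, γ_1 = x} has positive measure. Then for every x_0 ∈ X and r_0 > 0, the sphere S_{r_0}(x_0) = {y : d(x_0,y) = r_0} is m-negligible. -/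
open MeasureTheory Metric Set Filter Topology Bornology unitInterval ENNReal NNReal

/-- On a σ-finite, atomless, geodesic, non-degenerate metric measure space,
every sphere is negligible. -/
theorem spheres_negligible_of_nondegenerate
    {X : Type*} [MetricSpace X] [MeasurableSpace X] [BorelSpace X]
    (m : Measure X) [SigmaFinite m] (hatom : ∀ x : X, m {x} = 0)
    (hgeo : GeodesicMS X)
    (hnondeg : ∀ A : Set X, MeasurableSet A → 0 < m A → ∀ x : X,
      ∀ t : unitInterval, (t : ℝ) ∈ Set.Ioo (0 : ℝ) 1 →
        0 < m {y | ∃ γ : C(unitInterval, X), IsCSGeodesic γ ∧ γ 0 ∈ A ∧ γ 1 = x ∧ γ t = y})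
    (x0 : X) (r0 : ℝ) (hr0 : 0 < r0) :
    m {y | dist x0 y = r0} = 0 := by
  by_contra h
  have hpos : 0 < m {y | dist x0 y = r0} := pos_iff_ne_zero.mpr h
  set S : ℝ → Set X := fun s => {y | dist x0 y = s} with hS
  have hSmeas : ∀ s, MeasurableSet (S s) := fun s =>
    (isClosed_singleton.preimage (continuous_const.dist continuous_id)).measurableSet
  -- each sphere of radius s ∈ (0, r0) has positive measure
  have key : ∀ s : ℝ, s ∈ Set.Ioo 0 r0 → 0 < m (S s) := by
    rintro s ⟨hs0, hsr⟩
    have hts : s / r0 < 1 := (div_lt_one hr0).mpr hsr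
    have hts0 : 0 < s / r0 := div_pos hs0 hr0
    have ht0 : 0 < 1 - s / r0 := by linarith
    have ht1 : 1 - s / r0 < 1 := by linarith
    have htI : 1 - s / r0 ∈ unitInterval := ⟨ht0.le, ht1.le⟩
    have hpos' := hnondeg (S r0) (hSmeas r0) hpos x0 ⟨1 - s / r0, htI⟩ ⟨ht0, ht1⟩
    refine lt_of_lt_of_le hpos' (measure_mono ?_)
    rintro y ⟨γ, hγ, h0, h1, hty⟩
    have hd : dist (γ 0) (γ 1) = r0 := by rw [h1, dist_comm]; exact h0
    have hg := hγ ⟨1 - s / r0, htI⟩ 1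
    simp only [Set.Icc.coe_one] at hg
    rw [hd, hty, h1] at hg
    show dist x0 y = s
    rw [dist_comm, hg, abs_of_nonneg (by linarith)]
    field_simp
    ring
  -- contradiction with σ-finiteness
  have hdisj : Pairwise (Function.onFun Disjoint fun s : Set.Ioo (0:ℝ) r0 => S s) := by
    rintro ⟨a, ha⟩ ⟨b, hb⟩ hab
    refine Set.disjoint_left.mpr ?_
    rintro y (hya : dist x0 y = a) (hyb : dist x0 y = b)
    exact hab (Subtype.ext (hya ▸ hyb))
  have hcount := MeasureTheory.Measure.countable_meas_pos_of_disjoint_iUnion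
    (μ := m) (fun s : Set.Ioo (0:ℝ) r0 => hSmeas s) hdisj
  have huniv : {i : Set.Ioo (0:ℝ) r0 | 0 < m (S i)} = Set.univ := by
    ext ⟨s, hs⟩; simp [key s hs]
  rw [huniv, Set.countable_univ_iff] at hcount
  have hc : (Set.Ioo (0:ℝ) r0).Countable := Set.countable_coe_iff.mpr hcount
  have hmk := Cardinal.mk_Ioo_real hr0
  exact absurd (hmk ▸ hc.le_aleph0) (not_le.mpr Cardinal.aleph0_lt_continuum)
end

section
/- Every metric measure space satisfying the QCD(Q,K,N) condition is locally doubling: for every x ∈ X there exist an open set U ∋ x and constants C, R > 0 such that m(B_{2r}(y)) ≤ C·m(B_r(y)) for all r ∈ (0,R) and y ∈ U. -/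
open MeasureTheory Metric Set Filter Topology Bornology unitInterval ENNReal NNReal

noncomputable section AuxiliaryLemmas

/-- Lower-bound constant for the distortion coefficients. -/
private def cLB (K N : ℝ) : ℝ :=
  1 / (4 * Real.cosh (3 * Real.sqrt (|K| / (N - 1))) ^ 2)

private lemma cLB_pos (K N : ℝ) : 0 < cLB K N := by
  have h := Real.cosh_pos (x := 3 * Real.sqrt (|K| / (N - 1)))
  unfold cLB
  positivity

private lemma cLB_le_quarter (K N : ℝ) : cLB K N ≤ 1 / 4 := by
  have h := Real.one_le_cosh (3 * Real.sqrt (|K| / (N - 1)))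
  unfold cLB
  rw [div_le_div_iff₀ (by nlinarith) (by norm_num)]
  nlinarith

private lemma sigma_lb (K N θ : ℝ) (hN : 1 < N) (hθ0 : 0 ≤ θ) (hθ3 : θ ≤ 3) :
    ENNReal.ofReal (cLB K N) ≤ sigmaCoef K (N - 1) (1/4) θ := by
  have hN1 : (0:ℝ) < N - 1 := by linarith
  unfold sigmaCoef
  split_ifs with h1 h2 h3
  · exact ENNReal.ofReal_le_ofReal (cLB_le_quarter K N)
  · -- 0 < K and the angle is < π : sine ratio
    have hθpos : 0 < θ := by
      rcases lt_or_eq_of_le hθ0 with h | h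
      · exact h
      · exact absurd (by rw [← h]; ring) h1
    set x := θ * Real.sqrt (K / (N - 1)) with hx
    have hxpos : 0 < x := mul_pos hθpos (Real.sqrt_pos.mpr (by positivity))
    have hsinx : 0 < Real.sin x := Real.sin_pos_of_pos_of_lt_pi hxpos h3
    refine le_trans (ENNReal.ofReal_le_ofReal (cLB_le_quarter K N))
      (ENNReal.ofReal_le_ofReal ?_)
    have harg : (1/4 : ℝ) * θ * Real.sqrt (K / (N-1)) = x / 4 := by rw [hx]; ring
    rw [harg, le_div_iff₀ hsinx]
    have hs2 : Real.sin x ≤ 2 * Real.sin (x/2) := by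
      have e := Real.sin_two_mul (x/2)
      have e2 : 2 * (x/2) = x := by ring
      rw [e2] at e
      have hnn : 0 ≤ Real.sin (x/2) :=
        Real.sin_nonneg_of_nonneg_of_le_pi (by linarith) (by linarith)
      nlinarith [Real.cos_le_one (x/2)]
    have hs4 : Real.sin (x/2) ≤ 2 * Real.sin (x/4) := by
      have e := Real.sin_two_mul (x/4)
      have e2 : 2 * (x/4) = x/2 := by ring
      rw [e2] at e
      have hnn : 0 ≤ Real.sin (x/4) :=
        Real.sin_nonneg_of_nonneg_of_le_pi (by linarith) (by linarith)
      nlinarith [Real.cos_le_one (x/4)]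
    linarith
  · exact le_top
  · -- K < 0 : sinh ratio
    have hK0 : K ≠ 0 := by rintro rfl; exact h1 (by ring)
    have hKneg : K < 0 := lt_of_le_of_ne (not_lt.mp h2) hK0
    have hθpos : 0 < θ := by
      rcases lt_or_eq_of_le hθ0 with h | h
      · exact h
      · exact absurd (by rw [← h]; ring) h1
    have hαpos : 0 < Real.sqrt (-K / (N - 1)) :=
      Real.sqrt_pos.mpr (div_pos (neg_pos.mpr hKneg) hN1)
    set α := Real.sqrt (-K / (N - 1)) with hα
    set x := θ * α with hx
    have hxpos : 0 < x := mul_pos hθpos hαpos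
    have hαβ : α = Real.sqrt (|K| / (N-1)) := by rw [hα, abs_of_neg hKneg]
    have hxβ : x ≤ 3 * Real.sqrt (|K| / (N - 1)) := by
      rw [hx, ← hαβ]
      calc θ * α ≤ 3 * α := mul_le_mul_of_nonneg_right hθ3 hαpos.le
        _ = 3 * α := rfl
    apply ENNReal.ofReal_le_ofReal
    have harg : (1/4:ℝ) * θ * α = x/4 := by rw [hx]; ring
    rw [harg]
    have e1 := Real.sinh_two_mul (x/2)
    have e1' : 2 * (x/2) = x := by ring
    rw [e1'] at e1
    have e2 := Real.sinh_two_mul (x/4)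
    have e2' : 2 * (x/4) = x/2 := by ring
    rw [e2'] at e2
    have hid : Real.sinh x = 4 * Real.sinh (x/4) * Real.cosh (x/4) * Real.cosh (x/2) := by
      rw [e1, e2]; ring
    have hshp : 0 < Real.sinh (x/4) := by
      rw [← Real.sinh_zero]
      exact Real.sinh_lt_sinh.mpr (by linarith)
    have hβnn : 0 ≤ 3 * Real.sqrt (|K| / (N - 1)) := by positivity
    have hc1 : Real.cosh (x/4) ≤ Real.cosh (3 * Real.sqrt (|K| / (N - 1))) := by
      rw [Real.cosh_le_cosh, abs_of_nonneg (by linarith), abs_of_nonneg hβnn]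
      linarith
    have hc2 : Real.cosh (x/2) ≤ Real.cosh (3 * Real.sqrt (|K| / (N - 1))) := by
      rw [Real.cosh_le_cosh, abs_of_nonneg (by linarith), abs_of_nonneg hβnn]
      linarith
    have hcoshb1 : 1 ≤ Real.cosh (3 * Real.sqrt (|K| / (N - 1))) :=
      Real.one_le_cosh _
    have hc1p : 0 < Real.cosh (x/4) := Real.cosh_pos _
    have hc2p : 0 < Real.cosh (x/2) := Real.cosh_pos _
    rw [hid]
    have hfrac : Real.sinh (x/4) / (4 * Real.sinh (x/4) * Real.cosh (x/4) * Real.cosh (x/2))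
        = 1 / (4 * Real.cosh (x/4) * Real.cosh (x/2)) := by
      field_simp
    rw [hfrac]
    unfold cLB
    rw [div_le_div_iff₀ (by positivity) (by positivity)]
    nlinarith [hc1, hc2, hc1p, hc2p, hcoshb1]

private lemma tau_lb (K N θ : ℝ) (hN : 1 < N) (hθ0 : 0 ≤ θ) (hθ3 : θ ≤ 3) :
    ENNReal.ofReal (cLB K N) ≤ tauCoef K N (1/4) θ := by
  have hNpos : (0:ℝ) < N := by linarith
  have hc0 : 0 < cLB K N := cLB_pos K N
  unfold tauCoef
  have hsum : (1:ℝ)/N + (N-1)/N = 1 := by field_simp; ring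
  calc ENNReal.ofReal (cLB K N)
      = ENNReal.ofReal (cLB K N) ^ ((1:ℝ)/N) * ENNReal.ofReal (cLB K N) ^ ((N-1)/N) := by
        rw [← ENNReal.rpow_add _ _ (ENNReal.ofReal_pos.mpr hc0).ne' ENNReal.ofReal_ne_top,
          hsum, ENNReal.rpow_one]
    _ ≤ ENNReal.ofReal (1/4) ^ ((1:ℝ)/N) * sigmaCoef K (N-1) (1/4) θ ^ ((N-1)/N) :=
        mul_le_mul'
          (ENNReal.rpow_le_rpow (ENNReal.ofReal_le_ofReal (cLB_le_quarter K N)) (by positivity))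
          (ENNReal.rpow_le_rpow (sigma_lb K N θ hN hθ0 hθ3)
            (div_nonneg (by linarith) hNpos.le))

/-- Tightness: a finite Borel measure on a complete separable metric space is concentrated,
up to `ε`, on a compact set. -/
private lemma exists_compact_near {X : Type*} [MetricSpace X] [CompleteSpace X]
    [TopologicalSpace.SeparableSpace X] [Nonempty X] [MeasurableSpace X] [BorelSpace X]
    (ν : Measure X) [IsFiniteMeasure ν] {ε : ℝ≥0∞} (hε : ε ≠ 0) :
    ∃ T : Set X, IsCompact T ∧ ν Tᶜ ≤ ε := by
  obtain ⟨u, hu⟩ := TopologicalSpace.exists_dense_seq X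
  have key : ∀ n : ℕ, ∃ k : ℕ,
      ν (⋃ i ∈ Set.Iic k, closedBall (u i) (1/(n+1)))ᶜ ≤ ε * 2⁻¹ ^ (n+1) := by
    intro n
    have hrpos : (0:ℝ) < 1/(n+1) := by positivity
    set A : ℕ → Set X := fun k => ⋃ i ∈ Set.Iic k, closedBall (u i) (1/(n+1)) with hA
    have hAmeas : ∀ k, MeasurableSet (A k) :=
      fun k => MeasurableSet.biUnion (Set.to_countable _) (fun i _ => measurableSet_closedBall)
    have hmono : Monotone A := fun a b hab =>
      Set.biUnion_subset_biUnion_left (Set.Iic_subset_Iic.mpr hab)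
    have hunion : ⋃ k, A k = Set.univ := by
      apply Set.eq_univ_iff_forall.mpr
      intro z
      obtain ⟨i, hi⟩ := hu.exists_dist_lt z hrpos
      exact Set.mem_iUnion.mpr ⟨i, Set.mem_biUnion Set.self_mem_Iic hi.le⟩
    have hsup : ν Set.univ = ⨆ k, ν (A k) := by
      rw [← hunion, (hmono.directed_le).measure_iUnion]
    rcases eq_or_ne (ν Set.univ) 0 with h0 | h0
    · exact ⟨0, le_trans (le_trans (measure_mono (Set.subset_univ _)) h0.le) zero_le⟩
    · have hδ : ε * 2⁻¹ ^ (n+1) ≠ 0 := mul_ne_zero hε (pow_ne_zero _ (by simp))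
      have hlt : ν Set.univ - ε * 2⁻¹ ^ (n+1) < ⨆ k, ν (A k) := by
        rw [← hsup]
        exact ENNReal.sub_lt_self (measure_ne_top ν _) h0 hδ
      obtain ⟨k, hk⟩ := lt_iSup_iff.mp hlt
      refine ⟨k, ?_⟩
      rw [measure_compl (hAmeas k) (measure_ne_top ν _)]
      refine tsub_le_iff_right.mpr ?_
      rw [add_comm]
      calc ν Set.univ ≤ (ν Set.univ - ε * 2⁻¹ ^ (n+1)) + ε * 2⁻¹ ^ (n+1) := le_tsub_add
        _ ≤ ν (A k) + ε * 2⁻¹ ^ (n+1) := add_le_add_left hk.le _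
  choose k hk using key
  refine ⟨⋂ n, ⋃ i ∈ Set.Iic (k n), closedBall (u i) (1/(n+1)), ?_, ?_⟩
  · apply TotallyBounded.isCompact_of_isClosed
    · rw [Metric.totallyBounded_iff]
      intro δ hδ
      obtain ⟨n, hn⟩ := exists_nat_one_div_lt hδ
      refine ⟨u '' Set.Iic (k n), (Set.finite_Iic _).image u, ?_⟩
      intro z hz
      have hz' := Set.mem_iInter.mp hz n
      rcases Set.mem_iUnion₂.mp hz' with ⟨i, hi, hzi⟩
      refine Set.mem_iUnion₂.mpr ⟨u i, Set.mem_image_of_mem u hi, ?_⟩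
      rw [mem_ball]
      calc dist z (u i) ≤ 1/(n+1) := mem_closedBall.mp hzi
        _ < δ := hn
    · exact isClosed_iInter (fun n =>
        Set.Finite.isClosed_biUnion (Set.finite_Iic _) (fun i _ => isClosed_closedBall))
  · rw [Set.compl_iInter]
    refine le_trans (measure_iUnion_le _) (le_trans (ENNReal.tsum_le_tsum (fun n => hk n)) ?_)
    calc ∑' n:ℕ, ε * 2⁻¹ ^ (n+1) = ∑' n:ℕ, (ε * 2⁻¹) * 2⁻¹ ^ n := by
          congr 1; funext n; rw [pow_succ]; ring
      _ = (ε * 2⁻¹) * ∑' n:ℕ, 2⁻¹ ^ n := ENNReal.tsum_mul_left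
      _ = (ε * 2⁻¹) * 2 := by rw [ENNReal.tsum_geometric, ENNReal.one_sub_inv_two, inv_inv]
      _ = ε := by rw [mul_assoc, ENNReal.inv_mul_cancel (by simp) ENNReal.ofNat_ne_top, mul_one]
      _ ≤ ε := le_rfl

/-- Compact inner regularity for sets of finite measure. -/
private lemma exists_compact_subset_of_lt {X : Type*} [MetricSpace X] [CompleteSpace X]
    [TopologicalSpace.SeparableSpace X] [Nonempty X] [MeasurableSpace X] [BorelSpace X]
    (m : Measure X) {U : Set X} (hU : MeasurableSet U) (hUfin : m U ≠ ⊤) {ε : ℝ≥0∞} (hε : ε ≠ 0) :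
    ∃ T, T ⊆ U ∧ IsCompact T ∧ m U < m T + ε := by
  haveI : IsFiniteMeasure (m.restrict U) :=
    ⟨by rwa [Measure.restrict_apply_univ, lt_top_iff_ne_top]⟩
  have hε2 : ε/2 ≠ 0 := by simp [ENNReal.div_eq_zero_iff, hε]
  have hUU : m.restrict U U = m U := by
    rw [Measure.restrict_apply hU, Set.inter_self]
  obtain ⟨F, hFU, hFclosed, hF⟩ := hU.exists_isClosed_lt_add (μ := m.restrict U)
    (by rw [hUU]; exact hUfin) hε2
  obtain ⟨T', hT'c, hT'⟩ := exists_compact_near (m.restrict U) hε2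
  have hFmeas := hFclosed.measurableSet
  have hT'meas := hT'c.measurableSet
  refine ⟨F ∩ T', Set.inter_subset_left.trans hFU, hT'c.inter_left hFclosed, ?_⟩
  have hd : m.restrict U F ≤ m.restrict U (F ∩ T') + ε/2 := by
    rw [← measure_inter_add_diff F hT'meas]
    refine add_le_add_right (le_trans (measure_mono ?_) hT') _
    intro z hz
    exact hz.2
  have hFT : m.restrict U (F ∩ T') = m (F ∩ T') := by
    rw [Measure.restrict_apply (hFmeas.inter hT'meas),
      Set.inter_eq_self_of_subset_left (Set.inter_subset_left.trans hFU)]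
  calc m U = m.restrict U U := hUU.symm
    _ < m.restrict U F + ε/2 := hF
    _ ≤ (m.restrict U (F ∩ T') + ε/2) + ε/2 := add_le_add_left hd _
    _ = m (F ∩ T') + ε := by rw [hFT, add_assoc, ENNReal.add_halves]

private lemma measurable_eval {X : Type*} [MetricSpace X] [MeasurableSpace X] [BorelSpace X]
    (t : unitInterval) : Measurable (fun γ : C(unitInterval, X) => γ t) :=
  (continuous_eval_const t).measurable

end AuxiliaryLemmas

/-- Every `QCD(Q,K,N)` space is locally doubling. -/
theorem qcd_locally_doubling
    {X : Type*} [MetricSpace X] [CompleteSpace X] [TopologicalSpace.SeparableSpace X]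
    [MeasurableSpace X] [BorelSpace X] (m : Measure X)
    (hfin : ∀ s : Set X, IsBounded s → m s ≠ ⊤)
    (hsupp : ∀ U : Set X, IsOpen U → U.Nonempty → m U ≠ 0)
    (hatom : ∀ x : X, m {x} = 0)
    (Q K N : ℝ) (hQ : 1 ≤ Q) (hN : 1 < N) (hqcd : IsQCD m Q K N) :
    ∀ x : X, ∃ U : Set X, IsOpen U ∧ x ∈ U ∧ ∃ C R : ℝ, 0 < C ∧ 0 < R ∧
      ∀ y ∈ U, ∀ r : ℝ, 0 < r → r < R →
        m (ball y (2 * r)) ≤ ENNReal.ofReal C * m (ball y r) := by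
  classical
  obtain ⟨hgeo, hmonge, hineq⟩ := hqcd
  intro x
  haveI : Nonempty X := ⟨x⟩
  haveI : SecondCountableTopology X := UniformSpace.secondCountable_of_separable X
  haveI : IsLocallyFiniteMeasure m :=
    ⟨fun z => ⟨ball z 1, ball_mem_nhds z one_pos, lt_top_iff_ne_top.mpr (hfin _ isBounded_ball)⟩⟩
  have hNpos : (0:ℝ) < N := by linarith
  have hNne : N ≠ 0 := hNpos.ne'
  have hc0pos : 0 < cLB K N := cLB_pos K N
  refine ⟨ball x 1, isOpen_ball, mem_ball_self one_pos, 2 * Q / cLB K N ^ N, 1, ?_, one_pos, ?_⟩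
  · exact div_pos (by linarith) (Real.rpow_pos_of_pos hc0pos N)
  intro y _hy r hr hr1
  -- basic facts about the balls
  have hB2meas : MeasurableSet (ball y (2*r)) := measurableSet_ball
  have hB2fin : m (ball y (2*r)) ≠ ⊤ := hfin _ isBounded_ball
  have hB2pos : m (ball y (2*r)) ≠ 0 := hsupp _ isOpen_ball ⟨y, mem_ball_self (by linarith)⟩
  have hBefin : m (ball y (r/8)) ≠ ⊤ := hfin _ isBounded_ball
  have hBepos : m (ball y (r/8)) ≠ 0 := hsupp _ isOpen_ball ⟨y, mem_ball_self (by linarith)⟩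
  -- compact subsets carrying most of the mass
  have hhalf0 : m (ball y (2*r)) / 2 ≠ 0 := by
    simp [ENNReal.div_eq_zero_iff, hB2pos]
  have hhalft : m (ball y (2*r)) / 2 ≠ ⊤ := (ENNReal.div_lt_top hB2fin (by norm_num)).ne
  obtain ⟨K0, hK0U, hK0c, hK0m⟩ := exists_compact_subset_of_lt m hB2meas hB2fin hhalf0
  obtain ⟨K1, hK1U, hK1c, hK1m⟩ :=
    exists_compact_subset_of_lt m (measurableSet_ball (x := y) (ε := r/8)) hBefin hBepos
  have hK0meas := hK0c.measurableSet
  have hK1meas := hK1c.measurableSet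
  have hK0half : m (ball y (2*r)) / 2 < m K0 := by
    refine (ENNReal.add_lt_add_iff_right hhalft).mp ?_
    rw [ENNReal.add_halves]
    exact hK0m
  have hK0pos : m K0 ≠ 0 := by
    intro h; rw [h] at hK0half
    exact hhalf0 (le_antisymm (le_of_not_gt (fun hc => (not_lt_of_gt hc) hK0half)) zero_le)
  have hK0fin : m K0 ≠ ⊤ := ne_top_of_le_ne_top hB2fin (measure_mono hK0U)
  have hK1pos : m K1 ≠ 0 := by
    intro h; rw [h, zero_add] at hK1m; exact absurd hK1m (lt_irrefl _)
  have hK1fin : m K1 ≠ ⊤ := ne_top_of_le_ne_top hBefin (measure_mono hK1U)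
  -- the two marginal measures
  set μ0 : Measure X := (m K0)⁻¹ • m.restrict K0 with hμ0def
  set μ1 : Measure X := (m K1)⁻¹ • m.restrict K1 with hμ1def
  haveI hp0 : IsProbabilityMeasure μ0 := ⟨by
    rw [hμ0def, Measure.smul_apply, Measure.restrict_apply_univ, smul_eq_mul]
    exact ENNReal.inv_mul_cancel hK0pos hK0fin⟩
  haveI hp1 : IsProbabilityMeasure μ1 := ⟨by
    rw [hμ1def, Measure.smul_apply, Measure.restrict_apply_univ, smul_eq_mul]
    exact ENNReal.inv_mul_cancel hK1pos hK1fin⟩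
  have hμ0K0c : μ0 K0ᶜ = 0 := by
    rw [hμ0def, Measure.smul_apply, Measure.restrict_apply hK0meas.compl]
    simp
  have hμ1K1c : μ1 K1ᶜ = 0 := by
    rw [hμ1def, Measure.smul_apply, Measure.restrict_apply hK1meas.compl]
    simp
  have hac0 : μ0 ≪ m := by
    rw [hμ0def]
    intro s hs
    have h1 : m.restrict K0 s ≤ m s := Measure.le_iff'.mp Measure.restrict_le_self s
    rw [Measure.smul_apply, smul_eq_mul, le_antisymm (h1.trans hs.le) zero_le, mul_zero]
  have hac1 : μ1 ≪ m := by
    rw [hμ1def]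
    intro s hs
    have h1 : m.restrict K1 s ≤ m s := Measure.le_iff'.mp Measure.restrict_le_self s
    rw [Measure.smul_apply, smul_eq_mul, le_antisymm (h1.trans hs.le) zero_le, mul_zero]
  -- finite second moments
  have hfsm : ∀ (μ : Measure X), IsProbabilityMeasure μ → μ (ball y (2*r))ᶜ = 0 →
      FinSecondMoment μ := by
    intro μ hμ h
    refine ⟨y, ?_⟩
    have hb : ∀ᵐ z ∂μ, edist z y ^ 2 ≤ (ENNReal.ofReal (2*r)) ^ 2 := by
      rw [ae_iff]
      refine le_antisymm (le_trans (measure_mono ?_) h.le) zero_le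
      intro z hz
      simp only [Set.mem_setOf_eq, not_le] at hz
      simp only [Set.mem_compl_iff, mem_ball, not_lt]
      by_contra hzb
      push_neg at hzb
      refine absurd hz (not_lt.mpr ?_)
      have hzd : edist z y ≤ ENNReal.ofReal (2*r) := by
        rw [edist_dist]; exact ENNReal.ofReal_le_ofReal hzb.le
      exact pow_le_pow_left₀ zero_le hzd 2
    refine ne_top_of_le_ne_top ?_ (lintegral_mono_ae hb)
    rw [lintegral_const, measure_univ, mul_one]
    exact ENNReal.pow_ne_top ENNReal.ofReal_ne_top
  have hfsm0 : FinSecondMoment μ0 :=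
    hfsm μ0 hp0 (le_antisymm
      (le_trans (measure_mono (Set.compl_subset_compl.mpr hK0U)) hμ0K0c.le) zero_le)
  have hfsm1 : FinSecondMoment μ1 :=
    hfsm μ1 hp1 (le_antisymm
      (le_trans (measure_mono (Set.compl_subset_compl.mpr
        (hK1U.trans (ball_subset_ball (by linarith))))) hμ1K1c.le) zero_le)
  -- the optimal dynamical plan
  obtain ⟨⟨π, hπ, -⟩, hreg⟩ := hmonge μ0 μ1 hp0 hp1 hfsm0 hfsm1 hac0
  obtain ⟨-, hint⟩ := hreg π hπ
  obtain ⟨hπprob, hπgeo, hπ0, hπ1, hπW⟩ := hπ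
  haveI := hπprob
  -- the interpolation densities
  set ρ : unitInterval → X → ℝ≥0∞ := fun s =>
    if s = 0 then K0.indicator (fun _ => (m K0)⁻¹)
    else if s = 1 then K1.indicator (fun _ => (m K1)⁻¹)
    else (π.map (fun γ => γ s)).rnDeriv m with hρdef
  have h10 : (1 : unitInterval) ≠ 0 := by
    intro h
    rw [Subtype.ext_iff] at h
    norm_num at h
  have hρ0 : ρ 0 = K0.indicator (fun _ => (m K0)⁻¹) := by rw [hρdef]; simp
  have hρ1 : ρ 1 = K1.indicator (fun _ => (m K1)⁻¹) := by rw [hρdef]; simp [h10]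
  have hρs : ∀ s, s ≠ 0 → s ≠ 1 → ρ s = (π.map (fun γ => γ s)).rnDeriv m := by
    intro s h0 h1'
    rw [hρdef]
    simp [h0, h1']
  have hwd0 : m.withDensity (ρ 0) = μ0 := by
    rw [hρ0, withDensity_indicator hK0meas, withDensity_const]
  have hwd1 : m.withDensity (ρ 1) = μ1 := by
    rw [hρ1, withDensity_indicator hK1meas, withDensity_const]
  have hdens : ∀ s : unitInterval, π.map (fun γ => γ s) = m.withDensity (ρ s) := by
    intro s
    by_cases h0 : s = 0
    · rw [h0, hwd0, hπ0]
    by_cases h1' : s = 1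
    · rw [h1', hwd1, hπ1]
    haveI : IsProbabilityMeasure (π.map (fun γ => γ s)) :=
      Measure.isProbabilityMeasure_map (measurable_eval s).aemeasurable
    rw [hρs s h0 h1']
    exact (Measure.withDensity_rnDeriv_eq _ _ (hint s h1')).symm
  -- apply the QCD inequality at time 3/4
  set t₀ : unitInterval := ⟨3/4, Set.mem_Icc.mpr (by norm_num)⟩ with ht₀def
  have ht₀0 : t₀ ≠ 0 := by
    intro h; rw [Subtype.ext_iff] at h; norm_num [ht₀def] at h
  have ht₀1 : t₀ ≠ 1 := by
    intro h; rw [Subtype.ext_iff] at h; norm_num [ht₀def] at h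
  have hIoo : (t₀:ℝ) ∈ Set.Ioo (0:ℝ) 1 := by
    constructor <;> norm_num [ht₀def]
  have hae := hineq μ0 μ1 π ρ hp0 hp1 ⟨K0, hK0c, hμ0K0c⟩ ⟨K1, hK1c, hμ1K1c⟩ hac0 hac1
    ⟨hπprob, hπgeo, hπ0, hπ1, hπW⟩ hdens t₀ hIoo
  -- the constants
  set A : ℝ≥0∞ := ENNReal.ofReal Q ^ (-(1/N)) * ENNReal.ofReal (cLB K N) with hAdef
  have hQ0 : ENNReal.ofReal Q ≠ 0 := by
    rw [Ne, ENNReal.ofReal_eq_zero]; push_neg; linarith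
  have hQt : ENNReal.ofReal Q ≠ ⊤ := ENNReal.ofReal_ne_top
  have hQpos : (0:ℝ≥0∞) < ENNReal.ofReal Q := lt_of_le_of_ne zero_le (Ne.symm hQ0)
  have hA0 : A ≠ 0 := by
    refine mul_ne_zero (ENNReal.rpow_pos hQpos hQt).ne' ?_
    rw [Ne, ENNReal.ofReal_eq_zero]; push_neg; exact hc0pos
  have hAt : A ≠ ⊤ := by
    refine ENNReal.mul_ne_top ?_ ENNReal.ofReal_ne_top
    rw [ENNReal.rpow_neg]
    exact ENNReal.inv_ne_top.mpr (ENNReal.rpow_pos hQpos hQt).ne'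
  have hAN0 : A ^ N ≠ 0 := (ENNReal.rpow_pos (lt_of_le_of_ne zero_le (Ne.symm hA0)) hAt).ne'
  have hANt : A ^ N ≠ ⊤ := ENNReal.rpow_ne_top_of_nonneg hNpos.le hAt
  set M : ℝ≥0∞ := A ^ N * m K0 with hMdef
  have hM0 : M ≠ 0 := mul_ne_zero hAN0 hK0pos
  have hMt : M ≠ ⊤ := ENNReal.mul_ne_top hANt hK0fin
  -- the good set S
  have hρt₀ : ρ t₀ = (π.map (fun γ => γ t₀)).rnDeriv m := hρs t₀ ht₀0 ht₀1
  have hρmeas : Measurable (ρ t₀) := by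
    rw [hρt₀]; exact Measure.measurable_rnDeriv _ _
  set S : Set X := {z | ρ t₀ z ≤ M⁻¹} ∩ ball y r with hSdef
  have hSmeas : MeasurableSet S := (measurableSet_le hρmeas measurable_const).inter measurableSet_ball
  -- pointwise implication along good geodesics
  have hmain : ∀ γ : C(unitInterval, X),
      (ENNReal.ofReal Q ^ (-(1/N)) *
        (tauCoef K N (1 - (t₀:ℝ)) (dist (γ 0) (γ 1)) * ((ρ 0 (γ 0))⁻¹ ^ (1/N)) +
         tauCoef K N ((t₀:ℝ)) (dist (γ 0) (γ 1)) * ((ρ 1 (γ 1))⁻¹ ^ (1/N))) ≤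
        (ρ t₀ (γ t₀))⁻¹ ^ (1/N)) →
      γ 0 ∈ K0 → γ 1 ∈ K1 → IsCSGeodesic γ → γ t₀ ∈ S := by
    intro γ hP h0 h1' hg
    have hd0 : dist (γ 0) y < 2*r := mem_ball.mp (hK0U h0)
    have hd1 : dist (γ 1) y < r/8 := mem_ball.mp (hK1U h1')
    have hθlt : dist (γ 0) (γ 1) < 2*r + r/8 := by
      calc dist (γ 0) (γ 1) ≤ dist (γ 0) y + dist y (γ 1) := dist_triangle _ _ _
        _ < 2*r + r/8 := by rw [dist_comm y]; linarith
    have hθ3 : dist (γ 0) (γ 1) ≤ 3 := by linarith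
    have hρ0v : (ρ 0 (γ 0))⁻¹ = m K0 := by
      rw [hρ0, Set.indicator_of_mem h0, inv_inv]
    have hquarter : (1 : ℝ) - (t₀:ℝ) = 1/4 := by norm_num [ht₀def]
    have h5 : A * (m K0) ^ ((1:ℝ)/N) ≤ (ρ t₀ (γ t₀))⁻¹ ^ (1/N) := by
      refine le_trans ?_ hP
      rw [hAdef, mul_assoc]
      refine mul_le_mul_right (le_trans ?_ le_self_add) _
      rw [hρ0v, hquarter]
      exact mul_le_mul_left (tau_lb K N (dist (γ 0) (γ 1)) hN dist_nonneg hθ3) _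
    have h6 := ENNReal.rpow_le_rpow h5 hNpos.le
    rw [ENNReal.mul_rpow_of_nonneg _ _ hNpos.le, ← ENNReal.rpow_mul, ← ENNReal.rpow_mul,
      one_div, inv_mul_cancel₀ hNne, ENNReal.rpow_one, ENNReal.rpow_one] at h6
    have h7 : ρ t₀ (γ t₀) ≤ M⁻¹ := by
      rw [hMdef]
      have h8 := ENNReal.inv_le_inv.mpr h6
      rwa [inv_inv] at h8
    have h8 : γ t₀ ∈ ball y r := by
      have hgd := hg t₀ 1
      rw [mem_ball]
      have habs : |((1:unitInterval):ℝ) - (t₀:ℝ)| = 1/4 := by norm_num [ht₀def]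
      calc dist (γ t₀) y ≤ dist (γ t₀) (γ 1) + dist (γ 1) y := dist_triangle _ _ _
        _ = |((1:unitInterval):ℝ) - (t₀:ℝ)| * dist (γ 0) (γ 1) + dist (γ 1) y := by rw [hgd]
        _ = 1/4 * dist (γ 0) (γ 1) + dist (γ 1) y := by rw [habs]
        _ < r := by linarith
    exact ⟨h7, h8⟩
  -- almost everywhere, the interpolant lands in S
  have hae2 : ∀ᵐ γ ∂π, γ 0 ∈ K0 := by
    rw [ae_iff]
    have h : π ((fun γ : C(unitInterval,X) => γ 0) ⁻¹' K0ᶜ) = 0 := by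
      rw [← Measure.map_apply (measurable_eval 0) hK0meas.compl, hπ0]
      exact hμ0K0c
    exact h
  have hae3 : ∀ᵐ γ ∂π, γ 1 ∈ K1 := by
    rw [ae_iff]
    have h : π ((fun γ : C(unitInterval,X) => γ 1) ⁻¹' K1ᶜ) = 0 := by
      rw [← Measure.map_apply (measurable_eval 1) hK1meas.compl, hπ1]
      exact hμ1K1c
    exact h
  have hae4 : ∀ᵐ γ ∂π, IsCSGeodesic γ := by
    rw [ae_iff]
    exact hπgeo
  have haeS : ∀ᵐ γ ∂π, γ t₀ ∈ S :=
    (((hae.and hae2).and hae3).and hae4).mono (fun γ h => hmain γ h.1.1.1 h.1.1.2 h.1.2 h.2)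
  have hScompl : π.map (fun γ => γ t₀) Sᶜ = 0 := by
    rw [Measure.map_apply (measurable_eval t₀) hSmeas.compl]
    exact ae_iff.mp haeS
  -- mass transport estimate
  haveI : IsProbabilityMeasure (π.map (fun γ => γ t₀)) :=
    Measure.isProbabilityMeasure_map (measurable_eval t₀).aemeasurable
  have hone : (1:ℝ≥0∞) ≤ M⁻¹ * m (ball y r) := by
    calc (1:ℝ≥0∞) = (π.map (fun γ => γ t₀)) Set.univ := measure_univ.symm
      _ = (π.map (fun γ => γ t₀)) (S ∪ Sᶜ) := by rw [Set.union_compl_self]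
      _ ≤ (π.map (fun γ => γ t₀)) S + (π.map (fun γ => γ t₀)) Sᶜ := measure_union_le _ _
      _ = (π.map (fun γ => γ t₀)) S := by rw [hScompl, add_zero]
      _ = ∫⁻ z in S, ρ t₀ z ∂m := by rw [hdens t₀, withDensity_apply _ hSmeas]
      _ ≤ ∫⁻ _ in S, M⁻¹ ∂m := setLIntegral_mono measurable_const (fun z hz => hz.1)
      _ = M⁻¹ * m S := setLIntegral_const S M⁻¹
      _ ≤ M⁻¹ * m (ball y r) := mul_le_mul_right (measure_mono Set.inter_subset_right) _
  have hMle : M ≤ m (ball y r) := by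
    calc M = M * 1 := (mul_one M).symm
      _ ≤ M * (M⁻¹ * m (ball y r)) := mul_le_mul_right hone M
      _ = m (ball y r) := by rw [← mul_assoc, ENNReal.mul_inv_cancel hM0 hMt, one_mul]
  have hfinal : A ^ N * (m (ball y (2*r)) / 2) ≤ m (ball y r) :=
    le_trans (mul_le_mul_right hK0half.le _) (le_trans (le_of_eq hMdef.symm) hMle)
  -- identify the constant
  have hC : ENNReal.ofReal (2 * Q / cLB K N ^ N) = 2 * (A ^ N)⁻¹ := by
    have hAN : A ^ N = (ENNReal.ofReal Q)⁻¹ * ENNReal.ofReal (cLB K N ^ N) := by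
      rw [hAdef, ENNReal.mul_rpow_of_nonneg _ _ hNpos.le, ← ENNReal.rpow_mul,
        ENNReal.ofReal_rpow_of_pos hc0pos]
      congr 1
      rw [show -(1/N) * N = -1 by field_simp, ENNReal.rpow_neg_one]
    rw [hAN, ENNReal.mul_inv (Or.inl (ENNReal.inv_ne_zero.mpr hQt))
      (Or.inl (ENNReal.inv_ne_top.mpr hQ0)), inv_inv]
    rw [show 2 * Q / cLB K N ^ N = 2 * (Q * (cLB K N ^ N)⁻¹) from by ring]
    rw [ENNReal.ofReal_mul (by norm_num : (0:ℝ) ≤ 2), ENNReal.ofReal_mul (by linarith : (0:ℝ) ≤ Q),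
      ENNReal.ofReal_inv_of_pos (Real.rpow_pos_of_pos hc0pos N), ENNReal.ofReal_ofNat]
  calc m (ball y (2*r)) = 2 * (A ^ N)⁻¹ * (A ^ N * (m (ball y (2*r)) / 2)) := by
        rw [mul_assoc 2, ← mul_assoc ((A ^ N)⁻¹), ENNReal.inv_mul_cancel hAN0 hANt, one_mul,
          ENNReal.mul_div_cancel' (by norm_num) (by simp)]
    _ ≤ 2 * (A ^ N)⁻¹ * m (ball y r) := mul_le_mul_right hfinal _
    _ = ENNReal.ofReal (2 * Q / cLB K N ^ N) * m (ball y r) := by rw [hC]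
end
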